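/- arXiv:2209.02150 — 4 statements merged into one kernel-verified Lean document; each statement's English description precedes it below -/
import Mathlib

section
/- On the open set Ω := {(E,F,G) ∈ ℝ³ : E > 0, EG − F² > 0}, with D := EG − F², H := (GL + EN − 2FM)/(2D), and K := (LN − M²)/D, the directional derivative along (L,M,N) satisfies □H = −2H² + K at every point of Ω; moreover □K = −2HK on Ω. -/
/-!
Encode `(E,F,G)` as the symmetric matrix `[[E,F],[F,G]]` and let `B` be the mixed determinant,
a symmetric bilinear form with `B(x,x) = 2(EG − F²)`. For `v = (L,M,N)` one has
`H = B(x,v)/B(x,x)` and `K = B(v,v)/B(x,x)`. Along `v`, the numerator `B(x,v)` has derivative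
`B(v,v)` and the denominator `B(x,x)` has derivative `2B(x,v)`, so the quotient rule gives
`□H = K − 2H²` and `□K = −2HK`; this holds for every symmetric bilinear form.
-/

namespace ContinuousLinearMap

variable {E : Type*} [NormedAddCommGroup E] [NormedSpace ℝ E] (B : E →L[ℝ] E →L[ℝ] ℝ) {x : E}

theorem hasFDerivAt_apply_self (x : E) : HasFDerivAt (fun y => B y y) (B x + B.flip x) x :=
  (B.hasFDerivAt_of_bilinear (hasFDerivAt_id x) (hasFDerivAt_id x)).congr_fderiv <| by
    ext h; simp

theorem hasFDerivAt_inv_apply_self (hx : B x x ≠ 0) :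
    HasFDerivAt (fun y => (B y y)⁻¹) (-(B x x ^ 2)⁻¹ • (B x + B.flip x)) x :=
  ((hasFDerivAt_inv hx).comp (f := fun y => B y y) x (B.hasFDerivAt_apply_self x)).congr_fderiv <| by
    ext h; simp [mul_comm]

theorem fderiv_apply_div_apply_self_apply (hB : ∀ y z, B y z = B z y) (v : E) (hx : B x x ≠ 0) :
    fderiv ℝ (fun y => B y v / B y y) x v = -2 * (B x v / B x x) ^ 2 + B v v / B x x := by
  have h := ((B.flip v).hasFDerivAt.mul (B.hasFDerivAt_inv_apply_self hx)).fderiv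
  simp only [Pi.mul_def, flip_apply] at h
  simp only [div_eq_mul_inv, h, add_apply, smul_apply, flip_apply, smul_eq_mul, hB v x]
  field_simp
  ring

theorem fderiv_const_div_apply_self_apply (hB : ∀ y z, B y z = B z y) (v : E)
    (hx : B x x ≠ 0) :
    fderiv ℝ (fun y => B v v / B y y) x v = -2 * (B x v / B x x) * (B v v / B x x) := by
  have h := ((B.hasFDerivAt_inv_apply_self hx).const_mul (B v v)).fderiv
  simp only [div_eq_mul_inv, h, add_apply, smul_apply, flip_apply, smul_eq_mul, hB v x]
  field_simp
  ring

end ContinuousLinearMap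

open ContinuousLinearMap in
/-- The mixed determinant of `[[E,F],[F,G]]` and `[[E',F'],[F',G']]`:
`det (A + A') = det A + mixedDet A A' + det A'`. -/
noncomputable def mixedDet : (ℝ × ℝ × ℝ) →L[ℝ] (ℝ × ℝ × ℝ) →L[ℝ] ℝ :=
  let e₁ := fst ℝ ℝ (ℝ × ℝ)
  let e₂ := (fst ℝ ℝ ℝ).comp (snd ℝ ℝ (ℝ × ℝ))
  let e₃ := (snd ℝ ℝ ℝ).comp (snd ℝ ℝ (ℝ × ℝ))
  (mul ℝ ℝ).bilinearComp e₁ e₃ + (mul ℝ ℝ).bilinearComp e₃ e₁ - 2 • (mul ℝ ℝ).bilinearComp e₂ e₂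

@[simp]
theorem mixedDet_apply (y z : ℝ × ℝ × ℝ) :
    mixedDet y z = y.1 * z.2.2 + y.2.2 * z.1 - 2 * (y.2.1 * z.2.1) := by
  simp [mixedDet]

theorem mixedDet_comm (y z : ℝ × ℝ × ℝ) : mixedDet y z = mixedDet z y := by
  simp only [mixedDet_apply]
  ring

/-- On `Ω = {(E,F,G) : E > 0, EG − F² > 0}`, with `D = EG − F²`,
`H = (GL + EN − 2FM)/(2D)` and `K = (LN − M²)/D`, the directional derivative `□` along a
fixed direction `(L,M,N)` satisfies `□H = −2H² + K` and `□K = −2HK` at every point of `Ω`. -/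
theorem stmt12 (L M N : ℝ) :
    ∀ x : ℝ × ℝ × ℝ, 0 < x.1 → 0 < x.1 * x.2.2 - x.2.1 ^ 2 →
      (fderiv ℝ (fun y : ℝ × ℝ × ℝ =>
          (y.2.2 * L + y.1 * N - 2 * y.2.1 * M) / (2 * (y.1 * y.2.2 - y.2.1 ^ 2))) x) (L, M, N)
        = -2 * ((x.2.2 * L + x.1 * N - 2 * x.2.1 * M) / (2 * (x.1 * x.2.2 - x.2.1 ^ 2))) ^ 2
            + (L * N - M ^ 2) / (x.1 * x.2.2 - x.2.1 ^ 2) ∧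
      (fderiv ℝ (fun y : ℝ × ℝ × ℝ =>
          (L * N - M ^ 2) / (y.1 * y.2.2 - y.2.1 ^ 2)) x) (L, M, N)
        = -2 * ((x.2.2 * L + x.1 * N - 2 * x.2.1 * M) / (2 * (x.1 * x.2.2 - x.2.1 ^ 2)))
            * ((L * N - M ^ 2) / (x.1 * x.2.2 - x.2.1 ^ 2)) := by
  intro x _ hD
  set v : ℝ × ℝ × ℝ := (L, M, N)
  have hH : ∀ y : ℝ × ℝ × ℝ, (y.2.2 * L + y.1 * N - 2 * y.2.1 * M) / (2 * (y.1 * y.2.2 - y.2.1 ^ 2))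
      = mixedDet y v / mixedDet y y := fun y => by
    simp only [v, mixedDet_apply]
    congr 1 <;> ring
  have hK : ∀ y : ℝ × ℝ × ℝ, (L * N - M ^ 2) / (y.1 * y.2.2 - y.2.1 ^ 2)
      = mixedDet v v / mixedDet y y := fun y => by
    simp only [v, mixedDet_apply]
    rw [← mul_div_mul_left _ _ (two_ne_zero' ℝ)]
    congr 1 <;> ring
  have hx : mixedDet x x ≠ 0 := by
    rw [mixedDet_apply]
    nlinarith
  simp only [hH, hK]
  exact ⟨mixedDet.fderiv_apply_div_apply_self_apply mixedDet_comm v hx,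
    mixedDet.fderiv_const_div_apply_self_apply mixedDet_comm v hx⟩
end

section
/- Fix reals L, M, N and (i,j) ∈ ℝ². On Ω := {(E,F,G) : E > 0, EG − F² > 0}, set D := EG − F², H := (GL + EN − 2FM)/(2D), Q̃ := π·(Ei² + 2Fij + Gj²)/√D, and R̃ := π·(Li² + 2Mij + Nj²)/√D. Define functions a_k on Ω recursively by a_0 ≡ 1 and a_{k+1} := □a_k − H·a_k. Then for every k ≥ 1, □^k Q̃ = a_k·Q̃ + k·a_{k−1}·R̃ on Ω; in particular □Q̃ = R̃ − H·Q̃. -/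
open Real

/-- Directional derivative of `g : ℝ³ → ℝ` along the direction `(L, M, N)`:
`□g = L ∂g/∂E + M ∂g/∂F + N ∂g/∂G`. -/
noncomputable def boxDeriv (L M N : ℝ) (g : ℝ × ℝ × ℝ → ℝ) : ℝ × ℝ × ℝ → ℝ :=
  fun x => (fderiv ℝ g x) (L, M, N)

/-- `k`-fold iterated directional derivative `□^k`. -/
noncomputable def boxIter (L M N : ℝ) : ℕ → (ℝ × ℝ × ℝ → ℝ) → (ℝ × ℝ × ℝ → ℝ)
  | 0, g => g
  | k + 1, g => boxDeriv L M N (boxIter L M N k g)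

/-- The recursively defined sequence `a_0 ≡ 1`, `a_{k+1} = □a_k − H·a_k`
(so `a_k = (□ − H)^k · 1`). -/
noncomputable def aSeq (L M N : ℝ) (H : ℝ × ℝ × ℝ → ℝ) : ℕ → (ℝ × ℝ × ℝ → ℝ)
  | 0 => fun _ => 1
  | k + 1 => fun x => boxDeriv L M N (aSeq L M N H k) x - H x * aSeq L M N H k x

/-!
`□` is a derivation. For the Gram determinant `D = EG − F²` one has `□D = 2HD`, hence
`□√D = H√D` and `□(f/√D) = □f/√D − H·f/√D`. The numerator of `Q̃` is linear in `(E, F, G)`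
and `□` sends it to the numerator of `R̃`, which is constant; so `□Q̃ = R̃ − HQ̃` and
`□R̃ = −HR̃`. By the Leibniz rule,
`□(a_k Q̃ + k a_{k−1} R̃) = (□a_k − Ha_k) Q̃ + (a_k + k(□a_{k−1} − Ha_{k−1})) R̃
  = a_{k+1} Q̃ + (k+1) a_k R̃`,
which is the induction step.
-/

open scoped ContDiff Topology

section Calculus

variable {L M N : ℝ} {f g : ℝ × ℝ × ℝ → ℝ} {x : ℝ × ℝ × ℝ}

theorem HasFDerivAt.boxDeriv_eq {g' : ℝ × ℝ × ℝ →L[ℝ] ℝ} (h : HasFDerivAt g g' x) :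
    boxDeriv L M N g x = g' (L, M, N) := by
  rw [boxDeriv, h.fderiv]

theorem boxDeriv_congr (h : f =ᶠ[𝓝 x] g) : boxDeriv L M N f x = boxDeriv L M N g x := by
  rw [boxDeriv, boxDeriv, h.fderiv_eq]

theorem boxDeriv_const (c : ℝ) : boxDeriv L M N (fun _ => c) x = 0 :=
  (hasFDerivAt_const c x).boxDeriv_eq

theorem boxDeriv_add (hf : DifferentiableAt ℝ f x) (hg : DifferentiableAt ℝ g x) :
    boxDeriv L M N (fun y => f y + g y) x = boxDeriv L M N f x + boxDeriv L M N g x :=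
  (hf.hasFDerivAt.add hg.hasFDerivAt).boxDeriv_eq

theorem boxDeriv_const_mul (c : ℝ) (hf : DifferentiableAt ℝ f x) :
    boxDeriv L M N (fun y => c * f y) x = c * boxDeriv L M N f x :=
  (hf.hasFDerivAt.const_mul c).boxDeriv_eq

theorem boxDeriv_mul (hf : DifferentiableAt ℝ f x) (hg : DifferentiableAt ℝ g x) :
    boxDeriv L M N (fun y => f y * g y) x
      = boxDeriv L M N f x * g x + f x * boxDeriv L M N g x := by
  rw [(hf.hasFDerivAt.fun_mul hg.hasFDerivAt).boxDeriv_eq, boxDeriv, boxDeriv]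
  simp only [add_apply, smul_apply, smul_eq_mul]
  ring

theorem boxDeriv_comp {φ : ℝ → ℝ} {φ' : ℝ} (hφ : HasDerivAt φ φ' (f x))
    (hf : DifferentiableAt ℝ f x) :
    boxDeriv L M N (fun y => φ (f y)) x = φ' * boxDeriv L M N f x :=
  (hφ.comp_hasFDerivAt x hf.hasFDerivAt).boxDeriv_eq

theorem boxDeriv_div_of_boxDeriv_eq_mul {c : ℝ} (hf : DifferentiableAt ℝ f x)
    (hg : DifferentiableAt ℝ g x) (hg0 : g x ≠ 0) (hgc : boxDeriv L M N g x = c * g x) :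
    boxDeriv L M N (fun y => f y / g y) x = boxDeriv L M N f x / g x - c * (f x / g x) := by
  simp only [div_eq_mul_inv]
  rw [boxDeriv_mul (g := fun y => (g y)⁻¹) hf (hg.inv hg0),
    boxDeriv_comp (hasDerivAt_inv hg0) hg, hgc]
  field_simp
  ring

theorem boxDeriv_sqrt (hf : DifferentiableAt ℝ f x) (hf0 : f x ≠ 0) :
    boxDeriv L M N (fun y => √(f y)) x = boxDeriv L M N f x / (2 * √(f x)) := by
  rw [boxDeriv_comp (Real.hasDerivAt_sqrt hf0) hf]
  ring

theorem ContDiffOn.boxDeriv {U : Set (ℝ × ℝ × ℝ)} (hU : IsOpen U) (hg : ContDiffOn ℝ ∞ g U) :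
    ContDiffOn ℝ ∞ (boxDeriv L M N g) U :=
  (hg.fderiv_of_isOpen hU (m := ∞) (by norm_num)).clm_apply contDiffOn_const

end Calculus

section Iteration

variable {L M N : ℝ} {U : Set (ℝ × ℝ × ℝ)} {H Q R : ℝ × ℝ × ℝ → ℝ}

theorem contDiffOn_aSeq (hU : IsOpen U) (hH : ContDiffOn ℝ ∞ H U) (k : ℕ) :
    ContDiffOn ℝ ∞ (aSeq L M N H k) U := by
  induction k with
  | zero => exact contDiffOn_const
  | succ k ih => exact (ih.boxDeriv hU).sub (hH.mul ih)

theorem boxDeriv_aSeq (k : ℕ) (x : ℝ × ℝ × ℝ) :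
    boxDeriv L M N (aSeq L M N H k) x = aSeq L M N H (k + 1) x + H x * aSeq L M N H k x := by
  rw [aSeq]; ring

theorem boxIter_succ_eq_aSeq (hU : IsOpen U) (hH : ContDiffOn ℝ ∞ H U)
    (hQ : DifferentiableOn ℝ Q U) (hR : DifferentiableOn ℝ R U)
    (hQR : ∀ x ∈ U, boxDeriv L M N Q x = R x - H x * Q x)
    (hRR : ∀ x ∈ U, boxDeriv L M N R x = -(H x * R x)) (k : ℕ) :
    ∀ x ∈ U, boxIter L M N (k + 1) Q x
      = aSeq L M N H (k + 1) x * Q x + ((k + 1 : ℕ) : ℝ) * aSeq L M N H k x * R x := by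
  induction k with
  | zero =>
    intro x hx
    simp only [boxIter, aSeq, boxDeriv_const, hQR x hx]
    ring
  | succ k ih =>
    intro x hx
    have hxU : U ∈ 𝓝 x := hU.mem_nhds hx
    have ha : ∀ m, DifferentiableAt ℝ (aSeq L M N H m) x := fun m =>
      ((contDiffOn_aSeq hU hH m).differentiableOn (by simp)).differentiableAt hxU
    have hQx := hQ.differentiableAt hxU
    have hRx := hR.differentiableAt hxU
    have hloc : boxIter L M N (k + 1) Q =ᶠ[𝓝 x] fun y =>
        aSeq L M N H (k + 1) y * Q y + ((k + 1 : ℕ) : ℝ) * (aSeq L M N H k y * R y) := by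
      filter_upwards [hxU] with y hy
      rw [ih y hy, mul_assoc]
    rw [boxIter, boxDeriv_congr hloc,
      boxDeriv_add ((ha _).fun_mul hQx) (((ha _).fun_mul hRx).const_mul _),
      boxDeriv_mul (ha _) hQx, boxDeriv_const_mul _ ((ha _).fun_mul hRx), boxDeriv_mul (ha _) hRx,
      boxDeriv_aSeq, boxDeriv_aSeq, hQR x hx, hRR x hx]
    push_cast
    ring

end Iteration

section FundamentalForms

def gramDet (y : ℝ × ℝ × ℝ) : ℝ := y.1 * y.2.2 - y.2.1 ^ 2

def posGramDet : Set (ℝ × ℝ × ℝ) := {y | 0 < gramDet y}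

variable (L M N i j : ℝ)

noncomputable def meanCurvature (y : ℝ × ℝ × ℝ) : ℝ :=
  (y.2.2 * L + y.1 * N - 2 * y.2.1 * M) / (2 * gramDet y)

noncomputable def qTilde (y : ℝ × ℝ × ℝ) : ℝ :=
  π * (y.1 * i ^ 2 + 2 * y.2.1 * i * j + y.2.2 * j ^ 2) / √(gramDet y)

noncomputable def rTilde (y : ℝ × ℝ × ℝ) : ℝ :=
  π * (L * i ^ 2 + 2 * M * i * j + N * j ^ 2) / √(gramDet y)

variable {L M N i j} {f : ℝ × ℝ × ℝ → ℝ} {x : ℝ × ℝ × ℝ}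

theorem contDiff_gramDet : ContDiff ℝ ∞ gramDet := by
  unfold gramDet; fun_prop

theorem isOpen_posGramDet : IsOpen posGramDet :=
  isOpen_lt continuous_const contDiff_gramDet.continuous

theorem boxDeriv_gramDet : boxDeriv L M N gramDet x = x.2.2 * L + x.1 * N - 2 * x.2.1 * M := by
  have hE := hasFDerivAt_fst (𝕜 := ℝ) (p := x)
  have hFG := hasFDerivAt_snd (𝕜 := ℝ) (p := x)
  have h := (hE.mul hFG.snd).sub (hFG.fst.pow 2)
  refine h.boxDeriv_eq.trans ?_
  simp only [Nat.add_one_sub_one, pow_one, nsmul_eq_mul, Nat.cast_ofNat, sub_apply, add_apply,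
    smul_apply, ContinuousLinearMap.comp_apply, ContinuousLinearMap.coe_snd', smul_eq_mul,
    ContinuousLinearMap.coe_fst']
  ring

theorem boxDeriv_firstForm :
    boxDeriv L M N (fun y : ℝ × ℝ × ℝ => y.1 * i ^ 2 + 2 * y.2.1 * i * j + y.2.2 * j ^ 2) x
      = L * i ^ 2 + 2 * M * i * j + N * j ^ 2 := by
  have h₁ := (hasFDerivAt_fst (𝕜 := ℝ) (p := x)).mul_const (i ^ 2)
  have h₂ := (((hasFDerivAt_snd (𝕜 := ℝ) (p := x)).fst.const_mul 2).mul_const i).mul_const j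
  have h₃ := (hasFDerivAt_snd (𝕜 := ℝ) (p := x)).snd.mul_const (j ^ 2)
  refine ((h₁.add h₂).add h₃).boxDeriv_eq.trans ?_
  simp only [add_apply, smul_apply, ContinuousLinearMap.coe_fst', smul_eq_mul,
    ContinuousLinearMap.comp_apply, ContinuousLinearMap.coe_snd']
  ring

theorem boxDeriv_sqrt_gramDet (hx : x ∈ posGramDet) :
    boxDeriv L M N (fun y => √(gramDet y)) x = meanCurvature L M N x * √(gramDet x) := by
  have hD : 0 < gramDet x := hx
  rw [boxDeriv_sqrt (contDiff_gramDet.differentiable (by simp)).differentiableAt hD.ne',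
    boxDeriv_gramDet, meanCurvature]
  have hs := Real.sq_sqrt hD.le
  field_simp
  rw [hs]

theorem differentiableAt_sqrt_gramDet (hx : x ∈ posGramDet) :
    DifferentiableAt ℝ (fun y => √(gramDet y)) x :=
  (contDiff_gramDet.differentiable (by simp)).differentiableAt.sqrt (ne_of_gt hx)

theorem boxDeriv_div_sqrt_gramDet (hf : DifferentiableAt ℝ f x) (hx : x ∈ posGramDet) :
    boxDeriv L M N (fun y => f y / √(gramDet y)) x
      = boxDeriv L M N f x / √(gramDet x) - meanCurvature L M N x * (f x / √(gramDet x)) :=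
  boxDeriv_div_of_boxDeriv_eq_mul hf (differentiableAt_sqrt_gramDet hx)
    (Real.sqrt_pos.2 hx).ne' (boxDeriv_sqrt_gramDet hx)

theorem boxDeriv_qTilde (hx : x ∈ posGramDet) :
    boxDeriv L M N (qTilde i j) x = rTilde L M N i j x - meanCurvature L M N x * qTilde i j x := by
  unfold qTilde rTilde
  rw [boxDeriv_div_sqrt_gramDet (by fun_prop) hx, boxDeriv_const_mul _ (by fun_prop),
    boxDeriv_firstForm]

theorem boxDeriv_rTilde (hx : x ∈ posGramDet) :
    boxDeriv L M N (rTilde L M N i j) x = -(meanCurvature L M N x * rTilde L M N i j x) := by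
  unfold rTilde
  rw [boxDeriv_div_sqrt_gramDet (differentiableAt_const _) hx, boxDeriv_const]
  ring

theorem contDiffOn_meanCurvature : ContDiffOn ℝ ∞ (meanCurvature L M N) posGramDet := by
  refine ContDiffOn.div (by fun_prop) (contDiff_gramDet.const_smul (2 : ℝ)).contDiffOn ?_
  intro x hx
  exact mul_ne_zero two_ne_zero (ne_of_gt hx)

theorem differentiableOn_div_sqrt_gramDet (hf : Differentiable ℝ f) :
    DifferentiableOn ℝ (fun y => f y / √(gramDet y)) posGramDet := fun y hy => by
  simp only [div_eq_mul_inv]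
  exact ((hf y).fun_mul ((differentiableAt_sqrt_gramDet hy).inv
    (Real.sqrt_pos.2 hy).ne')).differentiableWithinAt

end FundamentalForms

/-- Fix reals `L, M, N` and `(i,j) ∈ ℝ²`. On
`Ω = {(E,F,G) : E > 0, EG − F² > 0}`, with `D = EG − F²`,
`H = (GL + EN − 2FM)/(2D)`, `Q̃ = π(Ei² + 2Fij + Gj²)/√D`, and
`R̃ = π(Li² + 2Mij + Nj²)/√D`, one has `□^k Q̃ = a_k Q̃ + k a_{k−1} R̃` on `Ω` for every
`k ≥ 1`; in particular `□Q̃ = R̃ − H·Q̃` on `Ω`. -/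
theorem stmt14 (L M N i j : ℝ) :
    (∀ k : ℕ, 1 ≤ k → ∀ x : ℝ × ℝ × ℝ, 0 < x.1 → 0 < x.1 * x.2.2 - x.2.1 ^ 2 →
      boxIter L M N k
          (fun y : ℝ × ℝ × ℝ =>
            π * (y.1 * i ^ 2 + 2 * y.2.1 * i * j + y.2.2 * j ^ 2) /
              Real.sqrt (y.1 * y.2.2 - y.2.1 ^ 2)) x
        = aSeq L M N
              (fun y => (y.2.2 * L + y.1 * N - 2 * y.2.1 * M) /
                (2 * (y.1 * y.2.2 - y.2.1 ^ 2))) k x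
            * (π * (x.1 * i ^ 2 + 2 * x.2.1 * i * j + x.2.2 * j ^ 2) /
                Real.sqrt (x.1 * x.2.2 - x.2.1 ^ 2))
          + k * aSeq L M N
              (fun y => (y.2.2 * L + y.1 * N - 2 * y.2.1 * M) /
                (2 * (y.1 * y.2.2 - y.2.1 ^ 2))) (k - 1) x
            * (π * (L * i ^ 2 + 2 * M * i * j + N * j ^ 2) /
                Real.sqrt (x.1 * x.2.2 - x.2.1 ^ 2))) ∧
    (∀ x : ℝ × ℝ × ℝ, 0 < x.1 → 0 < x.1 * x.2.2 - x.2.1 ^ 2 →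
      boxDeriv L M N
          (fun y : ℝ × ℝ × ℝ =>
            π * (y.1 * i ^ 2 + 2 * y.2.1 * i * j + y.2.2 * j ^ 2) /
              Real.sqrt (y.1 * y.2.2 - y.2.1 ^ 2)) x
        = π * (L * i ^ 2 + 2 * M * i * j + N * j ^ 2) /
              Real.sqrt (x.1 * x.2.2 - x.2.1 ^ 2)
          - (x.2.2 * L + x.1 * N - 2 * x.2.1 * M) / (2 * (x.1 * x.2.2 - x.2.1 ^ 2))
            * (π * (x.1 * i ^ 2 + 2 * x.2.1 * i * j + x.2.2 * j ^ 2) /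
                Real.sqrt (x.1 * x.2.2 - x.2.1 ^ 2))) := by
  refine ⟨fun k hk x _ hx => ?_, fun x _ hx => boxDeriv_qTilde hx⟩
  obtain ⟨k, rfl⟩ := Nat.exists_eq_add_of_le' hk
  rw [Nat.add_sub_cancel]
  exact boxIter_succ_eq_aSeq isOpen_posGramDet contDiffOn_meanCurvature
    (differentiableOn_div_sqrt_gramDet (by fun_prop))
    (differentiableOn_div_sqrt_gramDet (differentiable_const _))
    (fun _ => boxDeriv_qTilde) (fun _ => boxDeriv_rTilde) k x hx
end

section
/- For integers 0 ≤ K₁ ≤ K₂, the stencil U(K₁,K₂) := {(μ,ν) ∈ ℤ² : K₁ ≤ |μ| + |ν| ≤ K₂ + 1 and max(|μ|,|ν|) ≤ K₂} is a finite set of cardinality 2(K₁+K₂)(K₂−K₁+1) + 4K₂ + δ_{0,K₁}, where δ_{0,K₁} equals 1 if K₁ = 0 and 0 otherwise. -/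
/-!
Sort the points of `U(K₁,K₂)` by their ℓ¹-norm `n ∈ [K₁, K₂ + 1]`. The ℓ¹-sphere of radius
`n ≥ 1` in `ℤ²` has `4n` points (its upper and lower halves are graphs over `2n` abscissae each),
and the max-norm constraint only removes the four vertices `(±(K₂+1), 0)`, `(0, ±(K₂+1))` of the
outer sphere. Summing `4n` over the radii is Gauss's formula.
-/

open Finset

noncomputable section

def stencil (K₁ K₂ : ℕ) : Finset (ℤ × ℤ) :=
  ((Icc (-(K₂ : ℤ)) K₂) ×ˢ (Icc (-(K₂ : ℤ)) K₂)).filter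
    (fun p => (K₁ : ℤ) ≤ |p.1| + |p.2| ∧ |p.1| + |p.2| ≤ (K₂ : ℤ) + 1)

def l1Sphere (n : ℕ) : Finset (ℤ × ℤ) :=
  ((Icc (-(n : ℤ)) n) ×ˢ (Icc (-(n : ℤ)) n)).filter (fun p => |p.1| + |p.2| = n)

theorem mem_l1Sphere {n : ℕ} {p : ℤ × ℤ} : p ∈ l1Sphere n ↔ |p.1| + |p.2| = n := by
  simp only [l1Sphere, mem_filter, mem_product, mem_Icc, and_iff_right_iff_imp]
  grind

theorem l1Sphere_eq_union_image {n : ℕ} (hn : 0 < n) :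
    l1Sphere n = (Ioc (-(n : ℤ)) n).image (fun x => (x, (n : ℤ) - |x|)) ∪
      (Ico (-(n : ℤ)) n).image (fun x => (x, |x| - (n : ℤ))) := by
  ext ⟨x, y⟩
  simp only [mem_l1Sphere, mem_union, mem_image, mem_Ioc, mem_Ico, Prod.mk.injEq,
    Int.abs_eq_natAbs]
  constructor
  · intro h
    by_cases hupper : 0 < y ∨ (y = 0 ∧ 0 < x)
    · exact Or.inl ⟨x, by omega⟩
    · exact Or.inr ⟨x, by omega⟩
  · rintro (⟨a, ha, rfl, rfl⟩ | ⟨a, ha, rfl, rfl⟩) <;> omega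

theorem card_l1Sphere_of_pos {n : ℕ} (hn : 0 < n) : #(l1Sphere n) = 4 * n := by
  have hdisj : Disjoint ((Ioc (-(n : ℤ)) n).image (fun x => (x, (n : ℤ) - |x|)))
      ((Ico (-(n : ℤ)) n).image (fun x => (x, |x| - (n : ℤ)))) := by
    simp only [disjoint_left, mem_image, mem_Ioc, mem_Ico, Int.abs_eq_natAbs]
    rintro _ ⟨a, ha, rfl⟩ ⟨b, hb, hab⟩
    simp only [Prod.mk.injEq] at hab
    omega
  rw [l1Sphere_eq_union_image hn, card_union_of_disjoint hdisj,
    card_image_of_injective _ (fun _ _ h => congrArg Prod.fst h),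
    card_image_of_injective _ (fun _ _ h => congrArg Prod.fst h), Int.card_Ioc, Int.card_Ico]
  omega

theorem l1Sphere_zero : l1Sphere 0 = {0} := by
  ext ⟨x, y⟩
  simp only [mem_l1Sphere, mem_singleton, Prod.mk_eq_zero]
  grind

theorem card_l1Sphere (n : ℕ) : #(l1Sphere n) = 4 * n + if n = 0 then 1 else 0 := by
  rcases Nat.eq_zero_or_pos n with rfl | hn
  · simp [l1Sphere_zero]
  · simp [card_l1Sphere_of_pos hn, hn.ne']

theorem card_biUnion_l1Sphere (s : Finset ℕ) :
    #(s.biUnion l1Sphere) = ∑ n ∈ s, #(l1Sphere n) :=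
  card_biUnion fun m _ n _ hmn => disjoint_left.2 fun p hm hn =>
    hmn (by rw [mem_l1Sphere] at hm hn; omega)

def l1Vertices (n : ℕ) : Finset (ℤ × ℤ) :=
  {((n : ℤ), 0), (-(n : ℤ), 0), (0, (n : ℤ)), (0, -(n : ℤ))}

theorem card_l1Vertices {n : ℕ} (hn : 0 < n) : #(l1Vertices n) = 4 := by
  rw [l1Vertices, card_insert_of_notMem, card_insert_of_notMem, card_pair] <;> simp <;> omega

theorem mem_l1Vertices {n : ℕ} {p : ℤ × ℤ} : p ∈ l1Vertices n ↔
    |p.1| + |p.2| = n ∧ n ≤ max |p.1| |p.2| := by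
  obtain ⟨x, y⟩ := p
  simp only [l1Vertices, mem_insert, mem_singleton, Prod.mk.injEq]
  grind

theorem stencil_eq_sdiff (K₁ K₂ : ℕ) (h : K₁ ≤ K₂ + 1) :
    stencil K₁ K₂ = (Icc K₁ (K₂ + 1)).biUnion l1Sphere \ l1Vertices (K₂ + 1) := by
  ext ⟨x, y⟩
  simp only [stencil, mem_filter, mem_product, mem_Icc, mem_sdiff, mem_biUnion, mem_l1Sphere,
    mem_l1Vertices]
  constructor
  · rintro ⟨⟨hx, hy⟩, h1, h2⟩
    refine ⟨⟨(|x| + |y|).toNat, by omega, by omega⟩, by grind⟩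
  · grind

theorem l1Vertices_subset {K n : ℕ} (h : K ≤ n) :
    l1Vertices n ⊆ (Icc K n).biUnion l1Sphere := by
  intro p hp
  rw [mem_l1Vertices] at hp
  exact mem_biUnion.2 ⟨n, mem_Icc.2 ⟨h, le_rfl⟩, mem_l1Sphere.2 hp.1⟩

theorem sum_Icc_id_mul_two (a d : ℕ) : (∑ n ∈ Icc a (a + d), n) * 2 = (2 * a + d) * (d + 1) := by
  induction d with
  | zero => simp; ring
  | succ d ih =>
    rw [← add_assoc, sum_Icc_succ_top (by omega), add_mul, ih]
    ring

end

/-- For integers `0 ≤ K₁ ≤ K₂`, the correction stencil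
`U(K₁,K₂) = {(μ,ν) ∈ ℤ² : K₁ ≤ |μ| + |ν| ≤ K₂ + 1, max(|μ|,|ν|) ≤ K₂}` has cardinality
`2(K₁+K₂)(K₂−K₁+1) + 4K₂ + δ_{0,K₁}`. -/
theorem stmt15 (K₁ K₂ : ℕ) (h : K₁ ≤ K₂) :
    (((Finset.Icc (-(K₂ : ℤ)) (K₂ : ℤ)) ×ˢ (Finset.Icc (-(K₂ : ℤ)) (K₂ : ℤ))).filter
        (fun p : ℤ × ℤ => (K₁ : ℤ) ≤ |p.1| + |p.2| ∧ |p.1| + |p.2| ≤ (K₂ : ℤ) + 1)).card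
      = 2 * (K₁ + K₂) * (K₂ - K₁ + 1) + 4 * K₂ + (if K₁ = 0 then 1 else 0) := by
  change #(stencil K₁ K₂) = _
  obtain ⟨d, rfl⟩ := Nat.exists_eq_add_of_le h
  have hzero : (0 ∈ Icc K₁ (K₁ + d + 1)) ↔ K₁ = 0 := by simp
  rw [stencil_eq_sdiff K₁ _ (by omega), card_sdiff_of_subset (l1Vertices_subset (by omega)),
    card_biUnion_l1Sphere, card_l1Vertices (Nat.succ_pos _)]
  simp only [card_l1Sphere]
  rw [sum_add_distrib, ← mul_sum, sum_ite_eq', if_congr hzero rfl rfl]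
  have hgauss := sum_Icc_id_mul_two K₁ (d + 1)
  have hsum :
      4 * ∑ n ∈ Icc K₁ (K₁ + d + 1), n = 2 * (K₁ + (K₁ + d)) * (d + 1) + 4 * (K₁ + d) + 4 := by
    rw [← add_assoc] at hgauss
    linarith
  rw [show K₁ + d - K₁ + 1 = d + 1 by omega]
  split_ifs <;> omega
end

section
/- Let n ≥ 1 be an integer, and for m = 0,…,n set a_m := cos(mπ/(2n)) and b_m := sin(mπ/(2n)). Then the (n+1)×(n+1) real matrix A with entries A_{m,k} := C(n,k)·a_m^{n−k}·b_m^{k} for m,k = 0,…,n (where C(n,k) is the binomial coefficient) is invertible; equivalently, the linear system ∑_{k=0}^{n} C(n,k)·a_m^{n−k}·b_m^{k}·x_k = c_m, m = 0,…,n, has a unique solution for every right-hand side c. -/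
/-!
Row `m` of the matrix holds the coefficients of `(a_m X + b_m Y)^n`, so the matrix is the
projective Vandermonde matrix of the points `(b_m, a_m)` times the diagonal of binomial
coefficients. The projective Vandermonde determinant is `∏_{i<j} (b_j a_i - b_i a_j)`, and for
points on the unit circle each factor is `sin (θ_j - θ_i)`, which is positive because the angles
`mπ/(2n)` increase and span at most `π/2`.
-/

open Real Matrix Finset

namespace Matrix

section BinomialProjVandermonde

variable {R : Type*} [CommRing R] {n : ℕ}

def binomialProjVandermonde (v w : Fin (n + 1) → R) : Matrix (Fin (n + 1)) (Fin (n + 1)) R :=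
  of fun m k => (n.choose k : R) * w m ^ (n - (k : ℕ)) * v m ^ (k : ℕ)

theorem binomialProjVandermonde_eq_mul_diagonal (v w : Fin (n + 1) → R) :
    binomialProjVandermonde v w =
      projVandermonde v w * diagonal fun k : Fin (n + 1) => (n.choose k : R) := by
  ext m k
  simp only [binomialProjVandermonde, of_apply, mul_diagonal, projVandermonde_apply, Fin.val_rev]
  rw [Nat.add_sub_add_right]
  ring

theorem det_binomialProjVandermonde (v w : Fin (n + 1) → R) :
    (binomialProjVandermonde v w).det =
      (∏ i, ∏ j ∈ Ioi i, (v j * w i - v i * w j)) * ∏ k : Fin (n + 1), (n.choose k : R) := by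
  rw [binomialProjVandermonde_eq_mul_diagonal, det_mul, det_projVandermonde, det_diagonal]

theorem isUnit_binomialProjVandermonde {K : Type*} [Field K] [CharZero K]
    {v w : Fin (n + 1) → K} (h : ∀ i j, i < j → v j * w i - v i * w j ≠ 0) :
    IsUnit (binomialProjVandermonde v w) := by
  rw [isUnit_iff_isUnit_det, det_binomialProjVandermonde, isUnit_iff_ne_zero]
  refine mul_ne_zero (prod_ne_zero_iff.mpr fun i _ => prod_ne_zero_iff.mpr fun j hj =>
    h i j (mem_Ioi.mp hj)) (prod_ne_zero_iff.mpr fun k _ => ?_)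
  exact Nat.cast_ne_zero.mpr (Nat.choose_pos (k.is_le)).ne'

theorem isUnit_binomialProjVandermonde_sin_cos {θ : Fin (n + 1) → ℝ} (hθ : StrictMono θ)
    (hπ : ∀ i j, θ j - θ i < π) :
    IsUnit (binomialProjVandermonde (fun m => sin (θ m)) (fun m => cos (θ m))) := by
  refine isUnit_binomialProjVandermonde fun i j hij => ?_
  have hsin : sin (θ j) * cos (θ i) - sin (θ i) * cos (θ j) = sin (θ j - θ i) := by
    rw [sin_sub]; ring
  rw [hsin]
  exact (sin_pos_of_pos_of_lt_pi (sub_pos.mpr (hθ hij)) (hπ i j)).ne'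

end BinomialProjVandermonde

theorem existsUnique_mulVec_eq_of_isUnit {R ι : Type*} [CommRing R] [Fintype ι] [DecidableEq ι]
    {A : Matrix ι ι R} (hA : IsUnit A) (c : ι → R) : ∃! x, A *ᵥ x = c :=
  Function.Bijective.existsUnique
    ⟨mulVec_injective_of_isUnit hA, mulVec_surjective_iff_isUnit.mpr hA⟩ c

end Matrix

theorem strictMono_mul_pi_div (n : ℕ) :
    StrictMono fun m : Fin (n + 1) => (m : ℕ) * π / (2 * n) := by
  intro i j hij
  have hn : (0 : ℝ) < n := Nat.cast_pos.mpr (by omega)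
  have hij' : ((i : ℕ) : ℝ) < (j : ℕ) := Nat.cast_lt.mpr hij
  dsimp only
  gcongr

theorem mul_pi_div_le_pi_div_two {n : ℕ} (m : Fin (n + 1)) : (m : ℕ) * π / (2 * n) ≤ π / 2 := by
  have hm : ((m : ℕ) : ℝ) / n ≤ 1 :=
    div_le_one_of_le₀ (Nat.cast_le.mpr (m.is_le)) n.cast_nonneg
  calc (m : ℕ) * π / (2 * n) = ((m : ℕ) / n) * (π / 2) := by ring
    _ ≤ 1 * (π / 2) := by gcongr
    _ = π / 2 := one_mul _

theorem mul_pi_div_sub_lt_pi (n : ℕ) (i j : Fin (n + 1)) :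
    (j : ℕ) * π / (2 * n) - (i : ℕ) * π / (2 * n) < π := by
  have hi : 0 ≤ (i : ℕ) * π / (2 * n) := by positivity
  linarith [mul_pi_div_le_pi_div_two j, pi_pos]

theorem stmt16_general (n : ℕ) :
    IsUnit (Matrix.of (fun m k : Fin (n + 1) =>
        (n.choose k : ℝ) * Real.cos ((m : ℕ) * π / (2 * n)) ^ (n - (k : ℕ))
          * Real.sin ((m : ℕ) * π / (2 * n)) ^ (k : ℕ))) ∧
    ∀ c : Fin (n + 1) → ℝ, ∃! x : Fin (n + 1) → ℝ, ∀ m : Fin (n + 1),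
      ∑ k : Fin (n + 1),
          (n.choose k : ℝ) * Real.cos ((m : ℕ) * π / (2 * n)) ^ (n - (k : ℕ))
            * Real.sin ((m : ℕ) * π / (2 * n)) ^ (k : ℕ) * x k
        = c m := by
  have hA := isUnit_binomialProjVandermonde_sin_cos (strictMono_mul_pi_div n)
    (mul_pi_div_sub_lt_pi n)
  refine ⟨hA, fun c => ?_⟩
  simpa only [funext_iff, mulVec, dotProduct, binomialProjVandermonde, of_apply] using
    existsUnique_mulVec_eq_of_isUnit hA c

/-- For `n ≥ 1`, with `a_m = cos(mπ/(2n))`, `b_m = sin(mπ/(2n))`,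
the `(n+1)×(n+1)` matrix `A_{m,k} = C(n,k)·a_m^{n−k}·b_m^k` is invertible; equivalently,
the linear system `∑_k C(n,k)·a_m^{n−k}·b_m^k·x_k = c_m` has a unique solution for every
right-hand side `c`. -/
theorem stmt16 (n : ℕ) (hn : 1 ≤ n) :
    IsUnit (Matrix.of (fun m k : Fin (n + 1) =>
        (n.choose k : ℝ) * Real.cos ((m : ℕ) * π / (2 * n)) ^ (n - (k : ℕ))
          * Real.sin ((m : ℕ) * π / (2 * n)) ^ (k : ℕ))) ∧
    ∀ c : Fin (n + 1) → ℝ, ∃! x : Fin (n + 1) → ℝ, ∀ m : Fin (n + 1),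
      ∑ k : Fin (n + 1),
          (n.choose k : ℝ) * Real.cos ((m : ℕ) * π / (2 * n)) ^ (n - (k : ℕ))
            * Real.sin ((m : ℕ) * π / (2 * n)) ^ (k : ℕ) * x k
        = c m :=
  stmt16_general n
end
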